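/- arXiv:1406.7857 — 2 statements merged into one kernel-verified Lean document; each statement's English description precedes it below -/
import Mathlib

section
/- Let O be a conic in PG(2,q), q odd, and let ACE and BDF be two triangles inscribed in O such that no three of the six vertices A, B, C, D, E, F are collinear. Then the six sides AC, CE, EA, BD, DF, FB are all tangent to a common conic. -/
/-!
Take `A, C, E` as a projective frame. The conic passes through the frame points, so in these
coordinates it reads `f yz + g xz + h xy = 0`, with `f g h ≠ 0` by nondegeneracy, and the
chord through two of its points `p, q` has line coordinates proportional to
`(f / (p₀ q₀), g / (p₁ q₁), h / (p₂ q₂))`. Let `πᵢ` be the product of the `i`-th coordinates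
of `B, D, G`. The conic with tangential equation
`f² π₁ π₂ l₁ l₂ + g² π₀ π₂ l₀ l₂ + h² π₀ π₁ l₀ l₁` touches the coordinate lines, i.e. the
sides of `ACE`, and on the chord `BD` its tangential equation is a multiple of the equation of
the original conic at `G`, so it touches the sides of `BDG` as well. Its point equation is
the adjugate form: the line `XY` is tangent to a nondegenerate conic `Q` with bilinear form `b`
iff the discriminant `b(X, Y)² - Q(X) Q(Y)` vanishes, and up to sign and a factor `4` this
discriminant is the adjugate form of `Q` evaluated at `X × Y`.
-/

/-- Incidence pairing in `PG(2,q)`: the point `v` lies on the line `l` iff `dotp l v = 0`. -/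
def dotp {F : Type*} [Field F] (l v : Fin 3 → F) : F :=
  l 0 * v 0 + l 1 * v 1 + l 2 * v 2

/-- Cross product of two vectors in `F^3`: the line through two points, and the
intersection point of two lines. -/
def cross3 {F : Type*} [Field F] (u v : Fin 3 → F) : Fin 3 → F :=
  ![u 1 * v 2 - u 2 * v 1, u 2 * v 0 - u 0 * v 2, u 0 * v 1 - u 1 * v 0]

/-- Evaluation of the quadratic form with coefficient vector
`cf = (a, b, c, d, e, f)` (for `a x² + b y² + c z² + d xy + e xz + f yz`). -/
def qeval {F : Type*} [Field F] (cf : Fin 6 → F) (v : Fin 3 → F) : F :=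
  cf 0 * v 0 ^ 2 + cf 1 * v 1 ^ 2 + cf 2 * v 2 ^ 2 +
    cf 3 * (v 0 * v 1) + cf 4 * (v 0 * v 2) + cf 5 * (v 1 * v 2)

/-- Symmetric matrix associated to the quadratic form `cf = (a, b, c, d, e, f)`;
the form is a (nondegenerate) conic iff this matrix is nonsingular. -/
def qmat {F : Type*} [Field F] (cf : Fin 6 → F) : Matrix (Fin 3) (Fin 3) F :=
  !![cf 0, cf 3 / 2, cf 4 / 2; cf 3 / 2, cf 1, cf 5 / 2; cf 4 / 2, cf 5 / 2, cf 2]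

/-- Collinearity of three points of `PG(2,q)`: some nonzero line is incident with all. -/
def Col {F : Type*} [Field F] (u v w : Fin 3 → F) : Prop :=
  ∃ l : Fin 3 → F, l ≠ 0 ∧ dotp l u = 0 ∧ dotp l v = 0 ∧ dotp l w = 0

/-- The line `l` is tangent to the conic `cf`: it meets it in exactly one projective
point. -/
def TangentLine {F : Type*} [Field F] (cf : Fin 6 → F) (l : Fin 3 → F) : Prop :=
  (∃ v : Fin 3 → F, v ≠ 0 ∧ dotp l v = 0 ∧ qeval cf v = 0) ∧
    ∀ v w : Fin 3 → F, v ≠ 0 → w ≠ 0 → dotp l v = 0 → qeval cf v = 0 →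
      dotp l w = 0 → qeval cf w = 0 → ∃ c : F, w = c • v

section
variable {F : Type*} [Field F]

def det3 (u v w : Fin 3 → F) : F := dotp (cross3 u v) w

lemma dotp_cross3_self_left (u v : Fin 3 → F) : dotp (cross3 u v) u = 0 := by
  simp only [dotp, cross3, Matrix.cons_val_zero, Matrix.cons_val_one, Matrix.cons_val_two,
    Matrix.head_cons, Matrix.tail_cons]
  ring

lemma dotp_cross3_self_right (u v : Fin 3 → F) : dotp (cross3 u v) v = 0 := by
  simp only [dotp, cross3, Matrix.cons_val_zero, Matrix.cons_val_one, Matrix.cons_val_two,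
    Matrix.head_cons, Matrix.tail_cons]
  ring

lemma dotp_smul_add_smul (l X Y : Fin 3 → F) (a b : F) :
    dotp l (a • X + b • Y) = a * dotp l X + b * dotp l Y := by
  simp only [dotp, Pi.add_apply, Pi.smul_apply, smul_eq_mul]
  ring

lemma det3_smul_eq (u v w p : Fin 3 → F) :
    det3 u v w • p = det3 p v w • u + det3 u p w • v + det3 u v p • w := by
  funext i
  fin_cases i <;>
    simp only [det3, dotp, cross3, Fin.isValue, Fin.zero_eta, Fin.mk_one, Fin.reduceFinMk,
      Matrix.cons_val_zero, Matrix.cons_val_one, Matrix.cons_val, Pi.smul_apply, smul_eq_mul,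
      Pi.add_apply] <;>
    ring

lemma cross3_smul_add_smul (X Y : Fin 3 → F) (a b a' b' : F) :
    cross3 (a • X + b • Y) (a' • X + b' • Y) = (a * b' - b * a') • cross3 X Y := by
  funext i
  fin_cases i <;>
    simp only [cross3, Fin.isValue, Fin.zero_eta, Fin.mk_one, Fin.reduceFinMk,
      Matrix.cons_val_zero, Matrix.cons_val_one, Matrix.cons_val, Pi.add_apply, Pi.smul_apply,
      smul_eq_mul] <;>
    ring

lemma cross3_ne_zero_of_det3_ne_zero {u v w : Fin 3 → F} (h : det3 u v w ≠ 0) :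
    cross3 u v ≠ 0 := by
  intro huv
  apply h
  simp [det3, huv, dotp]

lemma col_of_det3_eq_zero {u v w : Fin 3 → F} (h : det3 u v w = 0) : Col u v w := by
  have hM : (Matrix.of ![u, v, w]).det = 0 := by
    rw [← h, Matrix.det_fin_three]
    simp only [Matrix.of_apply, Matrix.cons_val', Matrix.cons_val_fin_one, Matrix.cons_val_zero,
      Matrix.cons_val_one, Matrix.cons_val, det3, dotp, cross3]
    ring
  obtain ⟨l, hl, hMl⟩ := Matrix.exists_mulVec_eq_zero_iff.mpr hM
  refine ⟨l, hl, ?_, ?_, ?_⟩ <;>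
  · have := congrFun hMl
    simp_all [Matrix.mulVec, dotProduct, Fin.sum_univ_three, dotp, mul_comm]

lemma exists_eq_smul_of_cross3_eq_zero {v w : Fin 3 → F} (hv : v ≠ 0) (h : cross3 v w = 0) :
    ∃ c : F, w = c • v := by
  have hdep : ¬ LinearIndependent F ![v, w] := fun hli =>
    crossProduct_ne_zero_iff_linearIndependent.mpr hli h
  rw [LinearIndependent.pair_iff' hv] at hdep
  push Not at hdep
  obtain ⟨c, hc⟩ := hdep
  exact ⟨c, hc.symm⟩

lemma exists_dotp_ne_zero {n : Fin 3 → F} (hn : n ≠ 0) : ∃ z, dotp n z ≠ 0 := by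
  obtain ⟨i, hi⟩ := Function.ne_iff.mp hn
  refine ⟨Pi.single i 1, ?_⟩
  fin_cases i <;> simpa [dotp] using hi

lemma exists_eq_smul_add_smul_of_dotp_cross3 {X Y v : Fin 3 → F} (hXY : cross3 X Y ≠ 0)
    (hv : dotp (cross3 X Y) v = 0) : ∃ a b : F, v = a • X + b • Y := by
  obtain ⟨z, hz⟩ := exists_dotp_ne_zero hXY
  have hcramer := det3_smul_eq X Y z v
  rw [show det3 X Y v = 0 from hv, zero_smul, add_zero] at hcramer
  refine ⟨det3 v Y z / det3 X Y z, det3 X v z / det3 X Y z, ?_⟩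
  conv_lhs => rw [← inv_smul_smul₀ (show det3 X Y z ≠ 0 from hz) v, hcramer]
  rw [smul_add, smul_smul, smul_smul, inv_mul_eq_div, inv_mul_eq_div]

/-- Twice the bilinear form of `s`: `polar s v v = 2 * qeval s v`. -/
def polar (s : Fin 6 → F) (u v : Fin 3 → F) : F :=
  2 * (s 0 * (u 0 * v 0) + s 1 * (u 1 * v 1) + s 2 * (u 2 * v 2)) +
    s 3 * (u 0 * v 1 + u 1 * v 0) + s 4 * (u 0 * v 2 + u 2 * v 0) + s 5 * (u 1 * v 2 + u 2 * v 1)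

/-- `4 * (qmat s).det` (see `formDet_eq`), free of division. -/
def formDet (s : Fin 6 → F) : F :=
  4 * (s 0 * s 1 * s 2) + s 3 * s 4 * s 5 - s 0 * s 5 ^ 2 - s 1 * s 4 ^ 2 - s 2 * s 3 ^ 2

/-- The coefficients of the quadratic form of `4 • (qmat s).adjugate`; for nondegenerate `s`
its zeros are the tangent lines of the conic `s`. -/
def adjForm (s : Fin 6 → F) : Fin 6 → F :=
  ![4 * (s 1 * s 2) - s 5 ^ 2, 4 * (s 0 * s 2) - s 4 ^ 2, 4 * (s 0 * s 1) - s 3 ^ 2,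
    2 * (s 4 * s 5 - 2 * (s 2 * s 3)), 2 * (s 3 * s 5 - 2 * (s 1 * s 4)),
    2 * (s 3 * s 4 - 2 * (s 0 * s 5))]

lemma qeval_add (s t : Fin 6 → F) (v : Fin 3 → F) :
    qeval (s + t) v = qeval s v + qeval t v := by
  simp only [qeval, Pi.add_apply]
  ring

lemma qeval_smul (a : F) (s : Fin 6 → F) (v : Fin 3 → F) :
    qeval (a • s) v = a * qeval s v := by
  simp only [qeval, Pi.smul_apply, smul_eq_mul]
  ring

lemma qeval_smul_right (s : Fin 6 → F) (a : F) (v : Fin 3 → F) :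
    qeval s (a • v) = a ^ 2 * qeval s v := by
  simp only [qeval, Pi.smul_apply, smul_eq_mul]
  ring

lemma qeval_smul_add_smul (s : Fin 6 → F) (X Y : Fin 3 → F) (a b : F) :
    qeval s (a • X + b • Y) =
      qeval s X * a ^ 2 + polar s X Y * (a * b) + qeval s Y * b ^ 2 := by
  simp only [qeval, polar, Pi.add_apply, Pi.smul_apply, smul_eq_mul]
  ring

lemma qeval_smul_add_smul_add_smul (s : Fin 6 → F) (X Y Z : Fin 3 → F) (a b c : F) :
    qeval s (a • X + b • Y + c • Z) =
      a ^ 2 * qeval s X + b ^ 2 * qeval s Y + c ^ 2 * qeval s Z +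
        a * b * polar s X Y + a * c * polar s X Z + b * c * polar s Y Z := by
  simp only [qeval, polar, Pi.add_apply, Pi.smul_apply, smul_eq_mul]
  ring

lemma formDet_eq (h2 : (2 : F) ≠ 0) (s : Fin 6 → F) : formDet s = 4 * (qmat s).det := by
  rw [Matrix.det_fin_three]
  simp only [formDet, qmat, Matrix.of_apply, Matrix.cons_val', Matrix.cons_val_zero,
    Matrix.cons_val_one, Matrix.cons_val_two, Matrix.head_cons, Matrix.tail_cons,
    Matrix.empty_val', Matrix.cons_val_fin_one, Matrix.head_fin_const]
  field_simp
  ring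

lemma det_qmat_ne_zero_iff (h2 : (2 : F) ≠ 0) (s : Fin 6 → F) :
    (qmat s).det ≠ 0 ↔ formDet s ≠ 0 := by
  have h4 : (4 : F) ≠ 0 := by simpa [show (4 : F) = 2 * 2 by norm_num] using h2
  rw [formDet_eq h2, mul_ne_zero_iff, and_iff_right h4]

/-- The right side is `4 * det (Pᵀ * qmat s * P)` for the matrix `P` with columns `u, v, w`. -/
lemma formDet_mul_det3_sq (s : Fin 6 → F) (u v w : Fin 3 → F) :
    formDet s * det3 u v w ^ 2 =
      4 * (qeval s u * qeval s v * qeval s w) + polar s v w * polar s u w * polar s u v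
        - qeval s u * polar s v w ^ 2 - qeval s v * polar s u w ^ 2
        - qeval s w * polar s u v ^ 2 := by
  simp only [formDet, det3, dotp, cross3, qeval, polar, Matrix.cons_val_zero, Matrix.cons_val_one,
    Matrix.head_cons, Matrix.cons_val_two, Matrix.tail_cons]
  ring

lemma qeval_adjForm_cross3 (s : Fin 6 → F) (X Y : Fin 3 → F) :
    qeval (adjForm s) (cross3 X Y) = 4 * (qeval s X * qeval s Y) - polar s X Y ^ 2 := by
  simp only [qeval, polar, adjForm, cross3, Fin.isValue, Matrix.cons_val_zero,
    Matrix.cons_val_one, Matrix.cons_val]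
  ring

lemma adjForm_adjForm (s : Fin 6 → F) : adjForm (adjForm s) = (16 * formDet s) • s := by
  funext i
  fin_cases i <;>
    simp only [adjForm, formDet, Fin.isValue, Fin.zero_eta, Fin.mk_one, Fin.reduceFinMk,
      Matrix.cons_val_zero, Matrix.cons_val_one, Matrix.cons_val, Pi.smul_apply, smul_eq_mul] <;>
    ring

lemma formDet_adjForm (s : Fin 6 → F) : formDet (adjForm s) = 16 * formDet s ^ 2 := by
  simp only [formDet, adjForm, Fin.isValue, Matrix.cons_val_zero, Matrix.cons_val_one,
    Matrix.cons_val]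
  ring

lemma formDet_adjForm_ne_zero (h2 : (2 : F) ≠ 0) {s : Fin 6 → F} (hs : formDet s ≠ 0) :
    formDet (adjForm s) ≠ 0 := by
  rw [formDet_adjForm]
  exact mul_ne_zero (by simpa [show (16 : F) = 2 ^ 4 by norm_num] using h2) (pow_ne_zero 2 hs)

lemma exists_root_of_discr_eq_zero (h2 : (2 : F) ≠ 0) {α β γ : F}
    (hdisc : β ^ 2 = 4 * (α * γ)) :
    ∃ a b : F, ¬(a = 0 ∧ b = 0) ∧ α * a ^ 2 + β * (a * b) + γ * b ^ 2 = 0 := by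
  by_cases hα : α = 0
  · exact ⟨1, 0, by simp, by simp [hα]⟩
  · refine ⟨-β, 2 * α, fun h => mul_ne_zero h2 hα h.2, ?_⟩
    linear_combination (-α) * hdisc

lemma mul_eq_mul_of_discr_eq_zero (h2 : (2 : F) ≠ 0) {α β γ a b a' b' : F}
    (hdisc : β ^ 2 = 4 * (α * γ)) (hne : ¬(α = 0 ∧ β = 0 ∧ γ = 0))
    (h : α * a ^ 2 + β * (a * b) + γ * b ^ 2 = 0)
    (h' : α * a' ^ 2 + β * (a' * b') + γ * b' ^ 2 = 0) : a * b' = a' * b := by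
  by_cases hα : α = 0
  · have hβ : β = 0 := pow_eq_zero_iff two_ne_zero |>.mp (by rw [hdisc, hα]; ring)
    have hγ : γ ≠ 0 := fun hγ => hne ⟨hα, hβ, hγ⟩
    have hb : b = 0 := by simpa [hα, hβ, hγ] using h
    have hb' : b' = 0 := by simpa [hα, hβ, hγ] using h'
    rw [hb, hb', mul_zero, mul_zero]
  · -- `4 α q(a, b) = (2 α a + β b) ^ 2` once the discriminant vanishes.
    have hlin : ∀ a b : F,
        α * a ^ 2 + β * (a * b) + γ * b ^ 2 = 0 → 2 * α * a + β * b = 0 :=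
      fun a b hab => pow_eq_zero_iff two_ne_zero |>.mp
        (by linear_combination (4 * α) * hab + b ^ 2 * hdisc)
    have h2α : 2 * α * (a * b' - a' * b) = 0 := by
      linear_combination b' * hlin a b h - b * hlin a' b' h'
    exact sub_eq_zero.mp ((mul_eq_zero.mp h2α).resolve_left (mul_ne_zero h2 hα))

lemma not_isotropic_of_formDet_ne_zero {s : Fin 6 → F} (hs : formDet s ≠ 0) {X Y : Fin 3 → F}
    (hXY : cross3 X Y ≠ 0) : ¬(qeval s X = 0 ∧ polar s X Y = 0 ∧ qeval s Y = 0) := by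
  rintro ⟨hX, hXY', hY⟩
  obtain ⟨z, hz⟩ := exists_dotp_ne_zero hXY
  have hgram := formDet_mul_det3_sq s X Y z
  rw [hX, hY, hXY'] at hgram
  exact mul_ne_zero hs (pow_ne_zero 2 (show det3 X Y z ≠ 0 from hz)) (by rw [hgram]; ring)

lemma tangentLine_of_polar_sq (h2 : (2 : F) ≠ 0) {s : Fin 6 → F} (hs : formDet s ≠ 0)
    {X Y : Fin 3 → F} (hXY : cross3 X Y ≠ 0)
    (hdisc : polar s X Y ^ 2 = 4 * (qeval s X * qeval s Y)) :
    TangentLine s (cross3 X Y) := by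
  have hli := crossProduct_ne_zero_iff_linearIndependent.mp hXY
  constructor
  · obtain ⟨a, b, hab, hroot⟩ := exists_root_of_discr_eq_zero h2 hdisc
    refine ⟨a • X + b • Y, fun h => hab (LinearIndependent.pair_iff.mp hli a b h), ?_, ?_⟩
    · rw [dotp_smul_add_smul, dotp_cross3_self_left, dotp_cross3_self_right, mul_zero, mul_zero,
        add_zero]
    · rwa [qeval_smul_add_smul]
  · intro v w hv _ hlv hqv hlw hqw
    obtain ⟨a, b, rfl⟩ := exists_eq_smul_add_smul_of_dotp_cross3 hXY hlv
    obtain ⟨a', b', rfl⟩ := exists_eq_smul_add_smul_of_dotp_cross3 hXY hlw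
    rw [qeval_smul_add_smul] at hqv hqw
    have hprop := mul_eq_mul_of_discr_eq_zero h2 hdisc
      (not_isotropic_of_formDet_ne_zero hs hXY) hqv hqw
    apply exists_eq_smul_of_cross3_eq_zero hv
    rw [cross3_smul_add_smul, hprop, mul_comm b, sub_self, zero_smul]

lemma tangentLine_adjForm (h2 : (2 : F) ≠ 0) {s : Fin 6 → F} (hs : formDet s ≠ 0)
    {X Y : Fin 3 → F} (hXY : cross3 X Y ≠ 0) (hl : qeval s (cross3 X Y) = 0) :
    TangentLine (adjForm s) (cross3 X Y) := by
  refine tangentLine_of_polar_sq h2 (formDet_adjForm_ne_zero h2 hs) hXY ?_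
  have hdual := qeval_adjForm_cross3 (adjForm s) X Y
  rw [adjForm_adjForm, qeval_smul, hl, mul_zero] at hdual
  linear_combination hdual

/-- The conics through the three coordinate points; read in line coordinates, the conics
touching the three coordinate lines. -/
def frameConic (c p : Fin 3 → F) : F :=
  c 0 * (p 1 * p 2) + c 1 * (p 0 * p 2) + c 2 * (p 0 * p 1)

lemma frameConic_smul (c : Fin 3 → F) (a : F) (p : Fin 3 → F) :
    frameConic c (a • p) = a ^ 2 * frameConic c p := by
  simp only [frameConic, Pi.smul_apply, smul_eq_mul]
  ring

/-- The chord `p q` of `frameConic c` has line coordinates proportional to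
`(c₀ / (p₀ q₀), c₁ / (p₁ q₁), c₂ / (p₂ q₂))`. -/
lemma exists_cross3_mul_mul_eq_smul {c p q : Fin 3 → F} (hc : c 0 ≠ 0)
    (hp : frameConic c p = 0) (hq : frameConic c q = 0) :
    ∃ t : F, cross3 p q * p * q = t • c := by
  unfold frameConic at hp hq
  refine ⟨(cross3 p q * p * q) 0 / c 0, funext fun i => ?_⟩
  fin_cases i <;>
    simp only [cross3, Fin.isValue, Fin.zero_eta, Fin.mk_one, Fin.reduceFinMk,
      Matrix.cons_val_zero, Matrix.cons_val_one, Matrix.cons_val, Pi.mul_apply, Pi.smul_apply,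
      smul_eq_mul] <;>
    field_simp
  · linear_combination q 0 * q 1 * hp - p 0 * p 1 * hq
  · linear_combination p 0 * p 2 * hq - q 0 * q 2 * hp

/-- The coefficients, in line coordinates, of the conic touching the sides of the coordinate
triangle and of the triangle `p q r`. -/
def tangentConicCoeffs (c p q r : Fin 3 → F) : Fin 3 → F :=
  let π := p * q * r
  ![c 0 ^ 2 * (π 1 * π 2), c 1 ^ 2 * (π 0 * π 2), c 2 ^ 2 * (π 0 * π 1)]

lemma tangentConicCoeffs_rotate (c p q r : Fin 3 → F) :
    tangentConicCoeffs c q r p = tangentConicCoeffs c p q r := by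
  funext i
  fin_cases i <;>
    simp only [tangentConicCoeffs, Pi.mul_apply, Fin.zero_eta, Fin.mk_one, Fin.reduceFinMk,
      Matrix.cons_val_zero, Matrix.cons_val_one, Matrix.cons_val_two, Matrix.head_cons,
      Matrix.tail_cons] <;>
    ring

lemma frameConic_tangentConicCoeffs_cross3 {c p q r : Fin 3 → F} (hc : c 0 ≠ 0)
    (hp : frameConic c p = 0) (hq : frameConic c q = 0) (hr : frameConic c r = 0) :
    frameConic (tangentConicCoeffs c p q r) (cross3 p q) = 0 := by
  obtain ⟨t, ht⟩ := exists_cross3_mul_mul_eq_smul hc hp hq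
  set m := cross3 p q * p * q
  calc frameConic (tangentConicCoeffs c p q r) (cross3 p q)
      = c 0 ^ 2 * (r 1 * r 2) * (m 1 * m 2) + c 1 ^ 2 * (r 0 * r 2) * (m 0 * m 2)
          + c 2 ^ 2 * (r 0 * r 1) * (m 0 * m 1) := by
        simp only [frameConic, tangentConicCoeffs, m, Pi.mul_apply, Fin.isValue,
          Matrix.cons_val_zero, Matrix.cons_val_one, Matrix.cons_val]
        ring
    _ = t ^ 2 * (c 0 * c 1 * c 2) * frameConic c r := by
        simp only [ht, frameConic, Pi.smul_apply, smul_eq_mul]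
        ring
    _ = 0 := by rw [hr, mul_zero]

lemma tangentConicCoeffs_ne_zero {c p q r : Fin 3 → F} (hc : ∀ i, c i ≠ 0)
    (hp : ∀ i, p i ≠ 0) (hq : ∀ i, q i ≠ 0) (hr : ∀ i, r i ≠ 0) (i : Fin 3) :
    tangentConicCoeffs c p q r i ≠ 0 := by
  fin_cases i <;> simp [tangentConicCoeffs, hc, hp, hq, hr]

/-- Coordinates of `P` in the basis `A, C, E`, scaled by `det3 A C E` (Cramer's rule). -/
def frameCoords (A C E P : Fin 3 → F) : Fin 3 → F :=
  ![det3 P C E, det3 A P E, det3 A C P]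

def linProd (u v : Fin 3 → F) : Fin 6 → F :=
  ![u 0 * v 0, u 1 * v 1, u 2 * v 2, u 0 * v 1 + u 1 * v 0, u 0 * v 2 + u 2 * v 0,
    u 1 * v 2 + u 2 * v 1]

def frameDual (A C E c : Fin 3 → F) : Fin 6 → F :=
  c 0 • linProd C E + c 1 • linProd A E + c 2 • linProd A C

lemma qeval_linProd (u v l : Fin 3 → F) : qeval (linProd u v) l = dotp l u * dotp l v := by
  simp only [qeval, linProd, dotp, Fin.isValue, Matrix.cons_val_zero, Matrix.cons_val_one,
    Matrix.cons_val]
  ring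

lemma qeval_frameDual (A C E c l : Fin 3 → F) :
    qeval (frameDual A C E c) l = frameConic c ![dotp l A, dotp l C, dotp l E] := by
  simp only [frameDual, qeval_add, qeval_smul, qeval_linProd, frameConic]
  simp

lemma formDet_frameDual (A C E c : Fin 3 → F) :
    formDet (frameDual A C E c) = c 0 * c 1 * c 2 * det3 A C E ^ 2 := by
  simp only [formDet, frameDual, linProd, det3, dotp, cross3, Fin.isValue, Pi.add_apply,
    Pi.smul_apply, smul_eq_mul, Matrix.cons_val_zero, Matrix.cons_val_one, Matrix.cons_val]
  ring

lemma det3_sq_mul_qeval {s : Fin 6 → F} {A C E : Fin 3 → F} (hA : qeval s A = 0)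
    (hC : qeval s C = 0) (hE : qeval s E = 0) (P : Fin 3 → F) :
    det3 A C E ^ 2 * qeval s P =
      frameConic ![polar s C E, polar s A E, polar s A C] (frameCoords A C E P) := by
  rw [← qeval_smul_right, det3_smul_eq, qeval_smul_add_smul_add_smul, hA, hC, hE]
  simp only [frameConic, frameCoords, mul_zero, add_zero, zero_add, Fin.isValue,
    Matrix.cons_val_zero, Matrix.cons_val_one, Matrix.cons_val]
  ring

lemma cross3_frameCoords (A C E U V : Fin 3 → F) :
    cross3 (frameCoords A C E U) (frameCoords A C E V) =
      det3 A C E • ![dotp (cross3 U V) A, dotp (cross3 U V) C, dotp (cross3 U V) E] := by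
  funext i
  fin_cases i <;>
    simp only [frameCoords, det3, dotp, cross3, Fin.isValue, Fin.zero_eta, Fin.mk_one,
      Fin.reduceFinMk, Matrix.cons_val_zero, Matrix.cons_val_one, Matrix.cons_val,
      Pi.smul_apply, smul_eq_mul] <;>
    ring

lemma qeval_frameDual_cross3_eq_zero {A C E c U V : Fin 3 → F} (hACE : det3 A C E ≠ 0)
    (h : frameConic c (cross3 (frameCoords A C E U) (frameCoords A C E V)) = 0) :
    qeval (frameDual A C E c) (cross3 U V) = 0 := by
  rw [cross3_frameCoords, frameConic_smul, ← qeval_frameDual] at h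
  exact (mul_eq_zero.mp h).resolve_left (pow_ne_zero 2 hACE)

lemma qeval_frameDual_sides (A C E c : Fin 3 → F) :
    qeval (frameDual A C E c) (cross3 A C) = 0 ∧ qeval (frameDual A C E c) (cross3 C E) = 0 ∧
      qeval (frameDual A C E c) (cross3 E A) = 0 := by
  simp [qeval_frameDual, dotp_cross3_self_left, dotp_cross3_self_right, frameConic]

lemma exists_dual_conic_through_sides {s : Fin 6 → F} (hs : formDet s ≠ 0)
    {A B C D E G : Fin 3 → F} (hA : qeval s A = 0) (hB : qeval s B = 0) (hC : qeval s C = 0)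
    (hD : qeval s D = 0) (hE : qeval s E = 0) (hG : qeval s G = 0) (hACE : det3 A C E ≠ 0)
    (hBf : ∀ i, frameCoords A C E B i ≠ 0) (hDf : ∀ i, frameCoords A C E D i ≠ 0)
    (hGf : ∀ i, frameCoords A C E G i ≠ 0) :
    ∃ N : Fin 6 → F, formDet N ≠ 0 ∧
      qeval N (cross3 A C) = 0 ∧ qeval N (cross3 C E) = 0 ∧ qeval N (cross3 E A) = 0 ∧
      qeval N (cross3 B D) = 0 ∧ qeval N (cross3 D G) = 0 ∧ qeval N (cross3 G B) = 0 := by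
  set c : Fin 3 → F := ![polar s C E, polar s A E, polar s A C]
  have hc : ∀ i, c i ≠ 0 := by
    have hgram := formDet_mul_det3_sq s A C E
    rw [hA, hC, hE] at hgram
    have hprod : c 0 * c 1 * c 2 ≠ 0 := by
      rw [show c 0 * c 1 * c 2 = formDet s * det3 A C E ^ 2 by rw [hgram]; simp [c]]
      exact mul_ne_zero hs (pow_ne_zero 2 hACE)
    simp only [mul_ne_zero_iff] at hprod
    intro i
    fin_cases i <;> simp [hprod]
  have hK : ∀ P, qeval s P = 0 → frameConic c (frameCoords A C E P) = 0 := fun P hP => by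
    rw [← det3_sq_mul_qeval hA hC hE, hP, mul_zero]
  set b := frameCoords A C E B
  set d := frameCoords A C E D
  set g := frameCoords A C E G
  obtain ⟨hAC, hCE, hEA⟩ := qeval_frameDual_sides A C E (tangentConicCoeffs c b d g)
  refine ⟨frameDual A C E (tangentConicCoeffs c b d g), ?_, hAC, hCE, hEA, ?_, ?_, ?_⟩
  · rw [formDet_frameDual]
    have hN := tangentConicCoeffs_ne_zero hc hBf hDf hGf
    exact mul_ne_zero (mul_ne_zero (mul_ne_zero (hN 0) (hN 1)) (hN 2)) (pow_ne_zero 2 hACE)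
  all_goals apply qeval_frameDual_cross3_eq_zero hACE
  · exact frameConic_tangentConicCoeffs_cross3 (hc 0) (hK B hB) (hK D hD) (hK G hG)
  · rw [← tangentConicCoeffs_rotate]
    exact frameConic_tangentConicCoeffs_cross3 (hc 0) (hK D hD) (hK G hG) (hK B hB)
  · rw [← tangentConicCoeffs_rotate, ← tangentConicCoeffs_rotate]
    exact frameConic_tangentConicCoeffs_cross3 (hc 0) (hK G hG) (hK B hB) (hK D hD)

lemma two_ne_zero_of_odd_card [Fintype F] (hodd : Odd (Fintype.card F)) : (2 : F) ≠ 0 :=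
  Ring.two_ne_zero fun h => by
    have := FiniteField.even_card_iff_char_two.mp h
    rw [Nat.odd_iff] at hodd
    omega

end

theorem inscribed_triangles_sides_tangent_common_conic_general (F : Type*) [Field F] [Fintype F]
    (hodd : Odd (Fintype.card F)) (cf : Fin 6 → F) (hnd : (qmat cf).det ≠ 0)
    (A B C D E G : Fin 3 → F)
    (hon : ∀ i : Fin 6, qeval cf (![A, B, C, D, E, G] i) = 0)
    (hgen : ∀ i j k : Fin 6, i ≠ j → j ≠ k → i ≠ k →
      ¬ Col (![A, B, C, D, E, G] i) (![A, B, C, D, E, G] j) (![A, B, C, D, E, G] k)) :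
    ∃ cf' : Fin 6 → F, (qmat cf').det ≠ 0 ∧
      TangentLine cf' (cross3 A C) ∧ TangentLine cf' (cross3 C E) ∧
      TangentLine cf' (cross3 E A) ∧ TangentLine cf' (cross3 B D) ∧
      TangentLine cf' (cross3 D G) ∧ TangentLine cf' (cross3 G B) := by
  have h2 := two_ne_zero_of_odd_card hodd
  have hd : ∀ i j k : Fin 6, i ≠ j ∧ j ≠ k ∧ i ≠ k →
      det3 (![A, B, C, D, E, G] i) (![A, B, C, D, E, G] j) (![A, B, C, D, E, G] k) ≠ 0 :=
    fun i j k h => mt col_of_det3_eq_zero (hgen i j k h.1 h.2.1 h.2.2)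
  have hf : ∀ j : Fin 6, j ≠ 0 ∧ j ≠ 2 ∧ j ≠ 4 →
      ∀ i, frameCoords A C E (![A, B, C, D, E, G] j) i ≠ 0 := by
    rintro j ⟨hj0, hj2, hj4⟩ i
    fin_cases i
    exacts [hd j 2 4 ⟨hj2, by decide, hj4⟩, hd 0 j 4 ⟨hj0.symm, hj4, by decide⟩,
      hd 0 2 j ⟨by decide, hj2.symm, hj0.symm⟩]
  have hs := (det_qmat_ne_zero_iff h2 cf).mp hnd
  obtain ⟨N, hN, hAC, hCE, hEA, hBD, hDG, hGB⟩ :=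
    exists_dual_conic_through_sides hs (hon 0) (hon 1) (hon 2) (hon 3) (hon 4) (hon 5)
      (hd 0 2 4 (by decide)) (hf 1 (by decide)) (hf 3 (by decide)) (hf 5 (by decide))
  have hline : ∀ i j k : Fin 6, i ≠ j ∧ j ≠ k ∧ i ≠ k →
      cross3 (![A, B, C, D, E, G] i) (![A, B, C, D, E, G] j) ≠ 0 :=
    fun i j k h => cross3_ne_zero_of_det3_ne_zero (hd i j k h)
  exact ⟨adjForm N, (det_qmat_ne_zero_iff h2 _).mpr (formDet_adjForm_ne_zero h2 hN),
    tangentLine_adjForm h2 hN (hline 0 2 4 (by decide)) hAC,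
    tangentLine_adjForm h2 hN (hline 2 4 0 (by decide)) hCE,
    tangentLine_adjForm h2 hN (hline 4 0 2 (by decide)) hEA,
    tangentLine_adjForm h2 hN (hline 1 3 0 (by decide)) hBD,
    tangentLine_adjForm h2 hN (hline 3 5 0 (by decide)) hDG,
    tangentLine_adjForm h2 hN (hline 5 1 0 (by decide)) hGB⟩

/-- Two triangles `ACE` and `BDF` inscribed in a conic in `PG(2,q)`, `q` odd, with no
three of the six vertices collinear, have their six sides tangent to a common conic. -/
theorem inscribed_triangles_sides_tangent_common_conic (F : Type*) [Field F] [Fintype F]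
    (hodd : Odd (Fintype.card F)) (cf : Fin 6 → F) (hnd : (qmat cf).det ≠ 0)
    (A B C D E G : Fin 3 → F)
    (h0 : ∀ i : Fin 6, ![A, B, C, D, E, G] i ≠ 0)
    (hon : ∀ i : Fin 6, qeval cf (![A, B, C, D, E, G] i) = 0)
    (hgen : ∀ i j k : Fin 6, i ≠ j → j ≠ k → i ≠ k →
      ¬ Col (![A, B, C, D, E, G] i) (![A, B, C, D, E, G] j) (![A, B, C, D, E, G] k)) :
    ∃ cf' : Fin 6 → F, (qmat cf').det ≠ 0 ∧
      TangentLine cf' (cross3 A C) ∧ TangentLine cf' (cross3 C E) ∧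
      TangentLine cf' (cross3 E A) ∧ TangentLine cf' (cross3 B D) ∧
      TangentLine cf' (cross3 D G) ∧ TangentLine cf' (cross3 G B) :=
  inscribed_triangles_sides_tangent_common_conic_general F hodd cf hnd A B C D E G hon hgen
end

section
/- In PG(2,9), the four lines [1,1,1], [1,-1,1], [1,-1,-1], [1,1,-1] are simultaneously tangent to a conic O if and only if O has the form x^2 + (1/b)·y^2 - (1/(1+b))·z^2 = 0 for some b ∈ GF(9) with b ≠ 0 and b ≠ -1. -/
instance : Fact (Nat.Prime 3) := ⟨by norm_num⟩

/-- The field `GF(9)` of order 9. -/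
abbrev GF9 := GaloisField 3 2

/-!
The line `ℓ = [1, s, t]` is parametrised by `(y, z) ↦ (-(s y + t z), y, z)`, and on it the conic
`M = qmat cf` restricts to a binary quadratic form. The line is tangent iff this form has exactly
one projective zero, i.e. iff its discriminant vanishes (it cannot vanish identically, since a
conic containing a line is degenerate). The discriminant equals `-4 · ℓ adj(M) ℓᵀ`, so the tangent
lines are the points of the dual conic `adj M`. A symmetric matrix vanishing at the four points
`(1, ±1, ±1)` is `diag(p, q, r)` with `p + q + r = 0`. Hence `M`, a multiple of `adj (adj M)`, is
proportional to `diag(q r, p r, p q)`, whose zero set is that of `x² + (p/q) y² + (p/r) z²`: the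
normal form with `b = q / p`.
-/
open Matrix

variable {F : Type*} [Field F]

lemma four_ne_zero_of_two_ne_zero (h2 : (2 : F) ≠ 0) : (4 : F) ≠ 0 := by
  rw [show (4 : F) = 2 ^ 2 by norm_num]; exact pow_ne_zero 2 h2

section BinaryForm

def binForm (A B C : F) (p : F × F) : F :=
  A * p.1 ^ 2 + B * p.1 * p.2 + C * p.2 ^ 2

def HasUniqueZero (A B C : F) : Prop :=
  (∃ p : F × F, p ≠ 0 ∧ binForm A B C p = 0) ∧
    ∀ p q : F × F, p ≠ 0 → q ≠ 0 → binForm A B C p = 0 → binForm A B C q = 0 →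
      ∃ c : F, q = c • p

variable {A B C : F}

lemma four_mul_binForm (A B C : F) (p : F × F) :
    4 * A * binForm A B C p = (2 * A * p.1 + B * p.2) ^ 2 - (B ^ 2 - 4 * A * C) * p.2 ^ 2 := by
  simp only [binForm]; ring

lemma binForm_swap (A B C : F) (p : F × F) : binForm C B A p.swap = binForm A B C p := by
  simp only [binForm, Prod.fst_swap, Prod.snd_swap]; ring

lemma exists_eq_smul_iff_cross_eq_zero {p q : F × F} (hp : p ≠ 0) :
    (∃ c : F, q = c • p) ↔ p.1 * q.2 - p.2 * q.1 = 0 := by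
  constructor
  · rintro ⟨c, rfl⟩
    simp only [Prod.smul_fst, Prod.smul_snd, smul_eq_mul]; ring
  · intro h
    by_cases hp1 : p.1 = 0
    · have hp2 : p.2 ≠ 0 := fun hp2 => hp (Prod.ext hp1 hp2)
      refine ⟨q.2 / p.2, Prod.ext ?_ ?_⟩
      · simp only [Prod.smul_fst, smul_eq_mul, hp1, mul_zero]
        simpa [hp1, hp2] using h
      · simp [hp2]
    · refine ⟨q.1 / p.1, Prod.ext (by simp [hp1]) ?_⟩
      simp only [Prod.smul_snd, smul_eq_mul]
      field_simp
      linear_combination h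

/-- The witness `q` encodes the second root `-B/A - y/z` of `A t² + B t + C`, where
`p = (y, z)`. -/
lemma exists_zero_not_proportional {p : F × F} (hp : binForm A B C p = 0) (hp2 : p.2 ≠ 0)
    (hD : B ^ 2 - 4 * A * C ≠ 0) :
    ∃ q : F × F, q ≠ 0 ∧ binForm A B C q = 0 ∧ ∀ c : F, q ≠ c • p := by
  set q : F × F := (-(A * p.1 + B * p.2), A * p.2)
  have hsq : (2 * A * p.1 + B * p.2) ^ 2 = (B ^ 2 - 4 * A * C) * p.2 ^ 2 := by
    linear_combination 4 * A * hp - four_mul_binForm A B C p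
  have hcross : p.1 * q.2 - p.2 * q.1 ≠ 0 := by
    have : p.1 * q.2 - p.2 * q.1 = p.2 * (2 * A * p.1 + B * p.2) := by simp only [q]; ring
    rw [this]
    refine mul_ne_zero hp2 fun h => ?_
    rw [h, zero_pow two_ne_zero] at hsq
    exact mul_ne_zero hD (pow_ne_zero 2 hp2) hsq.symm
  refine ⟨q, fun hq => hcross (by simp [hq]), ?_, fun c hc => ?_⟩
  · have : binForm A B C q = A ^ 2 * binForm A B C p := by simp only [binForm, q]; ring
    rw [this, hp, mul_zero]
  · exact hcross ((exists_eq_smul_iff_cross_eq_zero (fun h => hp2 (by simp [h]))).1 ⟨c, hc⟩)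

lemma HasUniqueZero.disc_eq_zero (h : HasUniqueZero A B C) : B ^ 2 = 4 * A * C := by
  obtain ⟨⟨p, hp0, hp⟩, huniq⟩ := h
  by_contra hne
  have hD : B ^ 2 - 4 * A * C ≠ 0 := sub_ne_zero.mpr hne
  obtain ⟨q, hq0, hq, hqp⟩ :
      ∃ q : F × F, q ≠ 0 ∧ binForm A B C q = 0 ∧ ∀ c : F, q ≠ c • p := by
    by_cases hp2 : p.2 = 0
    · have hp1 : p.swap.2 ≠ 0 := fun hp1 => hp0 (Prod.ext hp1 hp2)
      obtain ⟨q, hq0, hq, hqp⟩ := exists_zero_not_proportional (A := C) (C := A)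
        (by rwa [binForm_swap]) hp1 (by rwa [mul_right_comm])
      refine ⟨q.swap, fun h => hq0 (by rw [← Prod.swap_swap q, h]; rfl),
        by rwa [← binForm_swap, Prod.swap_swap], fun c hc => hqp c ?_⟩
      rw [← Prod.swap_swap q, hc]
      rfl
    · exact exists_zero_not_proportional hp hp2 hD
  obtain ⟨c, hc⟩ := huniq p q hp0 hq0 hp hq
  exact hqp c hc

lemma hasUniqueZero_of_linear {α β : F} (hαβ : α ≠ 0 ∨ β ≠ 0)
    (h : ∀ p, binForm A B C p = 0 ↔ α * p.1 + β * p.2 = 0) : HasUniqueZero A B C := by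
  refine ⟨⟨(-β, α), fun h0 => ?_, (h _).2 (by ring)⟩, fun p q hp0 _ hp hq => ?_⟩
  · simp only [Prod.ext_iff, Prod.fst_zero, Prod.snd_zero, neg_eq_zero] at h0
    tauto
  · rw [h] at hp hq
    rw [exists_eq_smul_iff_cross_eq_zero hp0]
    rcases hαβ with hα | hβ
    · exact (mul_eq_zero.1 (by linear_combination q.2 * hp - p.2 * hq :
        α * (p.1 * q.2 - p.2 * q.1) = 0)).resolve_left hα
    · exact (mul_eq_zero.1 (by linear_combination p.1 * hq - q.1 * hp :
        β * (p.1 * q.2 - p.2 * q.1) = 0)).resolve_left hβ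

lemma binForm_eq_zero_iff_of_disc_eq_zero (h2 : (2 : F) ≠ 0) (hD : B ^ 2 = 4 * A * C)
    (hA : A ≠ 0) (p : F × F) : binForm A B C p = 0 ↔ 2 * A * p.1 + B * p.2 = 0 := by
  have h4A : 4 * A ≠ 0 := mul_ne_zero (four_ne_zero_of_two_ne_zero h2) hA
  have hsq : 4 * A * binForm A B C p = (2 * A * p.1 + B * p.2) ^ 2 := by
    rw [four_mul_binForm, hD]; ring
  rw [← mul_right_inj' h4A, mul_zero, hsq, pow_eq_zero_iff two_ne_zero]

lemma hasUniqueZero_of_disc_eq_zero (h2 : (2 : F) ≠ 0) (hD : B ^ 2 = 4 * A * C)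
    (h0 : A ≠ 0 ∨ B ≠ 0 ∨ C ≠ 0) : HasUniqueZero A B C := by
  rcases eq_or_ne A 0 with hA | hA
  · have hB : B = 0 := by simpa [hA] using hD
    have hC : C ≠ 0 := by tauto
    refine hasUniqueZero_of_linear (α := 0) (β := 1) (by simp) fun p => ?_
    simp [binForm, hA, hB, hC]
  · exact hasUniqueZero_of_linear (Or.inl (mul_ne_zero h2 hA))
      (binForm_eq_zero_iff_of_disc_eq_zero h2 hD hA)

end BinaryForm

section Line

variable (s t : F)

def linePoint (p : F × F) : Fin 3 → F :=
  ![-(s * p.1 + t * p.2), p.1, p.2]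

lemma dotp_linePoint (p : F × F) : dotp ![1, s, t] (linePoint s t p) = 0 := by
  simp [dotp, linePoint]

lemma eq_linePoint_of_dotp {v : Fin 3 → F} (hv : dotp ![1, s, t] v = 0) :
    v = linePoint s t (v 1, v 2) := by
  simp only [dotp, cons_val_zero, cons_val_one, cons_val_two,
    head_cons, tail_cons, one_mul] at hv
  ext i
  fin_cases i
  · simp only [Fin.zero_eta, linePoint, cons_val_zero]
    linear_combination hv
  all_goals rfl

lemma linePoint_injective : Function.Injective (linePoint s t) := fun p q h =>
  Prod.ext (by simpa [linePoint] using congrFun h 1) (by simpa [linePoint] using congrFun h 2)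

lemma linePoint_smul (c : F) (p : F × F) : linePoint s t (c • p) = c • linePoint s t p := by
  simp only [linePoint, Prod.smul_fst, Prod.smul_snd, smul_eq_mul, smul_cons, smul_empty]
  congr 1
  ring

lemma linePoint_eq_zero_iff {p : F × F} : linePoint s t p = 0 ↔ p = 0 := by
  rw [← (linePoint_injective s t).eq_iff, show (0 : Fin 3 → F) = linePoint s t 0 by
    ext i; fin_cases i <;> simp [linePoint]]

lemma qeval_linePoint (cf : Fin 6 → F) (p : F × F) :
    qeval cf (linePoint s t p) = binForm (cf 0 * s ^ 2 - cf 3 * s + cf 1)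
      (2 * cf 0 * s * t - cf 3 * t - cf 4 * s + cf 5) (cf 0 * t ^ 2 - cf 4 * t + cf 2) p := by
  simp only [qeval, linePoint, binForm, cons_val_zero, cons_val_one, cons_val]
  ring

theorem tangentLine_iff_hasUniqueZero (cf : Fin 6 → F) :
    TangentLine cf ![1, s, t] ↔ HasUniqueZero (cf 0 * s ^ 2 - cf 3 * s + cf 1)
      (2 * cf 0 * s * t - cf 3 * t - cf 4 * s + cf 5) (cf 0 * t ^ 2 - cf 4 * t + cf 2) := by
  simp only [TangentLine, HasUniqueZero, ← qeval_linePoint]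
  constructor
  · rintro ⟨⟨v, hv0, hlv, hqv⟩, huniq⟩
    refine ⟨⟨(v 1, v 2), ?_, ?_⟩, fun p q hp0 hq0 hp hq => ?_⟩
    · rwa [Ne, ← linePoint_eq_zero_iff s t, ← eq_linePoint_of_dotp s t hlv]
    · rwa [← eq_linePoint_of_dotp s t hlv]
    · obtain ⟨c, hc⟩ := huniq _ _ ((linePoint_eq_zero_iff s t).not.2 hp0)
        ((linePoint_eq_zero_iff s t).not.2 hq0) (dotp_linePoint s t p) hp
        (dotp_linePoint s t q) hq
      exact ⟨c, linePoint_injective s t (by rw [hc, linePoint_smul])⟩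
  · rintro ⟨⟨p, hp0, hp⟩, huniq⟩
    refine ⟨⟨linePoint s t p, (linePoint_eq_zero_iff s t).not.2 hp0, dotp_linePoint s t p, hp⟩,
      fun v w hv0 hw0 hlv hqv hlw hqw => ?_⟩
    rw [eq_linePoint_of_dotp s t hlv] at hv0 hqv ⊢
    rw [eq_linePoint_of_dotp s t hlw] at hw0 hqw ⊢
    obtain ⟨c, hc⟩ := huniq _ _ ((linePoint_eq_zero_iff s t).not.1 hv0)
      ((linePoint_eq_zero_iff s t).not.1 hw0) hqv hqw
    exact ⟨c, by rw [hc, linePoint_smul]⟩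

end Line

section DualConic

variable (cf : Fin 6 → F) (s t : F)

lemma isSymm_qmat : (qmat cf).IsSymm := by
  ext i j; fin_cases i <;> fin_cases j <;> rfl

lemma disc_restrict_eq_dotp_adjugate (h2 : (2 : F) ≠ 0) :
    (2 * cf 0 * s * t - cf 3 * t - cf 4 * s + cf 5) ^ 2
        - 4 * (cf 0 * s ^ 2 - cf 3 * s + cf 1) * (cf 0 * t ^ 2 - cf 4 * t + cf 2) =
      -4 * dotp ![1, s, t] (adjugate (qmat cf) *ᵥ ![1, s, t]) := by
  simp only [dotp, mulVec, dotProduct, qmat, adjugate_fin_three, of_apply, cons_val',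
    cons_val_zero, cons_val_one, cons_val_fin_one, cons_val, Fin.sum_univ_three]
  field_simp
  ring

lemma det_qmat_eq_zero_of_line_subset (h2 : (2 : F) ≠ 0)
    (hA : cf 0 * s ^ 2 - cf 3 * s + cf 1 = 0)
    (hB : 2 * cf 0 * s * t - cf 3 * t - cf 4 * s + cf 5 = 0)
    (hC : cf 0 * t ^ 2 - cf 4 * t + cf 2 = 0) : (qmat cf).det = 0 := by
  have hc1 : cf 1 = cf 3 * s - cf 0 * s ^ 2 := by linear_combination hA
  have hc5 : cf 5 = cf 3 * t + cf 4 * s - 2 * cf 0 * s * t := by linear_combination hB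
  have hc2 : cf 2 = cf 4 * t - cf 0 * t ^ 2 := by linear_combination hC
  simp only [qmat, det_fin_three, of_apply, cons_val', cons_val_zero, cons_val_fin_one,
    cons_val_one, cons_val]
  rw [hc1, hc5, hc2]
  field_simp
  ring

theorem tangentLine_iff_dotp_adjugate (h2 : (2 : F) ≠ 0) (hdet : (qmat cf).det ≠ 0) :
    TangentLine cf ![1, s, t] ↔ dotp ![1, s, t] (adjugate (qmat cf) *ᵥ ![1, s, t]) = 0 := by
  rw [tangentLine_iff_hasUniqueZero, ← mul_right_inj' (neg_ne_zero.2
    (four_ne_zero_of_two_ne_zero h2)), mul_zero, ← disc_restrict_eq_dotp_adjugate cf s t h2,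
    sub_eq_zero]
  refine ⟨HasUniqueZero.disc_eq_zero, fun hD => hasUniqueZero_of_disc_eq_zero h2 hD ?_⟩
  by_contra! h
  exact hdet (det_qmat_eq_zero_of_line_subset cf s t h2 h.1 h.2.1 h.2.2)

end DualConic

lemma dotp_mulVec_of_isSymm (N : Matrix (Fin 3) (Fin 3) F) (hN : N.IsSymm) (s t : F) :
    dotp ![1, s, t] (N *ᵥ ![1, s, t]) =
      N 0 0 + N 1 1 * s ^ 2 + N 2 2 * t ^ 2 + 2 * (N 0 1 * s + N 0 2 * t + N 1 2 * s * t) := by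
  simp only [dotp, mulVec, dotProduct, Fin.sum_univ_three, cons_val_zero, cons_val_one, cons_val,
    hN.apply 0 1, hN.apply 0 2, hN.apply 1 2]
  ring

theorem four_points_on_conic_iff (h2 : (2 : F) ≠ 0) {N : Matrix (Fin 3) (Fin 3) F}
    (hN : N.IsSymm) :
    (dotp ![1, 1, 1] (N *ᵥ ![1, 1, 1]) = 0 ∧ dotp ![1, -1, 1] (N *ᵥ ![1, -1, 1]) = 0 ∧
      dotp ![1, -1, -1] (N *ᵥ ![1, -1, -1]) = 0 ∧ dotp ![1, 1, -1] (N *ᵥ ![1, 1, -1]) = 0) ↔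
    ∃ d : Fin 3 → F, N = diagonal d ∧ d 0 + d 1 + d 2 = 0 := by
  simp only [dotp_mulVec_of_isSymm N hN]
  constructor
  · rintro ⟨e1, e2, e3, e4⟩
    have h8 : (8 : F) ≠ 0 := by
      rw [show (8 : F) = 2 ^ 3 by norm_num]; exact pow_ne_zero 3 h2
    have h01 : N 0 1 = 0 := (mul_eq_zero.1 (by linear_combination e1 - e2 - e3 + e4 :
      8 * N 0 1 = 0)).resolve_left h8
    have h02 : N 0 2 = 0 := (mul_eq_zero.1 (by linear_combination e1 + e2 - e3 - e4 :
      8 * N 0 2 = 0)).resolve_left h8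
    have h12 : N 1 2 = 0 := (mul_eq_zero.1 (by linear_combination e1 - e2 + e3 - e4 :
      8 * N 1 2 = 0)).resolve_left h8
    refine ⟨N.diag, ?_, by
      simp only [diag_apply]; linear_combination e1 - 2 * h01 - 2 * h02 - 2 * h12⟩
    ext i j
    fin_cases i <;> fin_cases j <;>
      simp [h01, h02, h12, hN.apply 0 1, hN.apply 0 2, hN.apply 1 2]
  · rintro ⟨d, rfl, hd⟩
    simp only [diagonal_apply_eq, diagonal_apply_ne _ (by decide : (0 : Fin 3) ≠ 1),
      diagonal_apply_ne _ (by decide : (0 : Fin 3) ≠ 2),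
      diagonal_apply_ne _ (by decide : (1 : Fin 3) ≠ 2)]
    refine ⟨?_, ?_, ?_, ?_⟩ <;> linear_combination hd

section NormalForm

variable (cf : Fin 6 → F)

theorem four_tangents_iff (h2 : (2 : F) ≠ 0) (hdet : (qmat cf).det ≠ 0) :
    (TangentLine cf ![1, 1, 1] ∧ TangentLine cf ![1, -1, 1] ∧
      TangentLine cf ![1, -1, -1] ∧ TangentLine cf ![1, 1, -1]) ↔
    ∃ d : Fin 3 → F, adjugate (qmat cf) = diagonal d ∧ d 0 + d 1 + d 2 = 0 := by
  simp only [tangentLine_iff_dotp_adjugate cf _ _ h2 hdet]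
  exact four_points_on_conic_iff h2 (isSymm_qmat cf).adjugate

lemma tangentLine_congr {cf' : Fin 6 → F} (h : ∀ v, qeval cf v = 0 ↔ qeval cf' v = 0)
    (l : Fin 3 → F) : TangentLine cf l ↔ TangentLine cf' l := by
  simp only [TangentLine, h]

lemma qmat_diag (a b c : F) : qmat ![a, b, c, 0, 0, 0] = diagonal ![a, b, c] := by
  ext i j; fin_cases i <;> fin_cases j <;> simp [qmat]

lemma qeval_eq_of_qmat_eq_diagonal (h2 : (2 : F) ≠ 0) {e : Fin 3 → F}
    (h : qmat cf = diagonal e) (v : Fin 3 → F) :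
    qeval cf v = e 0 * v 0 ^ 2 + e 1 * v 1 ^ 2 + e 2 * v 2 ^ 2 := by
  have hc0 : cf 0 = e 0 := by simpa [qmat] using congrFun₂ h 0 0
  have hc1 : cf 1 = e 1 := by simpa [qmat] using congrFun₂ h 1 1
  have hc2 : cf 2 = e 2 := by simpa [qmat] using congrFun₂ h 2 2
  have hc3 : cf 3 = 0 := by simpa [qmat, h2] using congrFun₂ h 0 1
  have hc4 : cf 4 = 0 := by simpa [qmat, h2] using congrFun₂ h 0 2
  have hc5 : cf 5 = 0 := by simpa [qmat, h2] using congrFun₂ h 1 2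
  simp [qeval, hc0, hc1, hc2, hc3, hc4, hc5]

lemma adjugate_diagonal_fin_three (d : Fin 3 → F) :
    adjugate (diagonal d) = diagonal ![d 1 * d 2, d 0 * d 2, d 0 * d 1] := by
  rw [adjugate_diagonal]
  congr 1
  ext i
  rw [← one_mul (∏ j ∈ _, d j), ← Finset.sdiff_singleton_eq_erase,
    ← Finset.prod_update_of_mem (Finset.mem_univ i), Fin.prod_univ_three]
  fin_cases i <;> simp

theorem exists_normal_form_of_adjugate_eq_diagonal (h2 : (2 : F) ≠ 0)
    (hdet : (qmat cf).det ≠ 0) {d : Fin 3 → F} (hadj : adjugate (qmat cf) = diagonal d)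
    (hsum : d 0 + d 1 + d 2 = 0) :
    ∃ b : F, b ≠ 0 ∧ b ≠ -1 ∧
      ∀ v : Fin 3 → F,
        qeval cf v = 0 ↔ v 0 ^ 2 + b⁻¹ * v 1 ^ 2 - (1 + b)⁻¹ * v 2 ^ 2 = 0 := by
  have hd : d 0 * d 1 * d 2 ≠ 0 := by
    have h := det_adjugate (qmat cf)
    rw [hadj, det_diagonal, Fin.prod_univ_three] at h
    rw [h]; exact pow_ne_zero _ hdet
  have hd0 : d 0 ≠ 0 := left_ne_zero_of_mul (left_ne_zero_of_mul hd)
  have hd1 : d 1 ≠ 0 := right_ne_zero_of_mul (left_ne_zero_of_mul hd)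
  have hd2 : d 2 ≠ 0 := right_ne_zero_of_mul hd
  have hM : qmat cf = diagonal ((qmat cf).det⁻¹ • ![d 1 * d 2, d 0 * d 2, d 0 * d 1]) := by
    have h := adjugate_adjugate (qmat cf) (by simp)
    rw [hadj, adjugate_diagonal_fin_three, Fintype.card_fin, pow_one] at h
    rw [diagonal_smul, h, inv_smul_smul₀ hdet]
  have h1b : 1 + d 1 / d 0 = -(d 2 / d 0) := by field_simp; linear_combination hsum
  refine ⟨d 1 / d 0, div_ne_zero hd1 hd0, fun h => hd2 ?_, fun v => ?_⟩
  · rw [h, add_neg_cancel, zero_eq_neg, div_eq_zero_iff] at h1b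
    exact h1b.resolve_right hd0
  · have hq : qeval cf v = ((qmat cf).det⁻¹ * d 1 * d 2) *
        (v 0 ^ 2 + (d 1 / d 0)⁻¹ * v 1 ^ 2 - (1 + d 1 / d 0)⁻¹ * v 2 ^ 2) := by
      rw [qeval_eq_of_qmat_eq_diagonal cf h2 hM, h1b]
      simp only [Pi.smul_apply, smul_eq_mul, cons_val_zero, cons_val_one,
        cons_val_two, head_cons, tail_cons]
      field_simp
      ring
    rw [hq, mul_eq_zero, or_iff_right (mul_ne_zero (mul_ne_zero (inv_ne_zero hdet) hd1) hd2)]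

theorem four_tangents_of_normal_form (h2 : (2 : F) ≠ 0) {b : F} (hb0 : b ≠ 0) (hb1 : b ≠ -1)
    (hcf : ∀ v : Fin 3 → F,
      qeval cf v = 0 ↔ v 0 ^ 2 + b⁻¹ * v 1 ^ 2 - (1 + b)⁻¹ * v 2 ^ 2 = 0) :
    TangentLine cf ![1, 1, 1] ∧ TangentLine cf ![1, -1, 1] ∧
      TangentLine cf ![1, -1, -1] ∧ TangentLine cf ![1, 1, -1] := by
  have hb1' : 1 + b ≠ 0 := fun h => hb1 (by linear_combination h)
  set D : Fin 6 → F := ![1, b⁻¹, -(1 + b)⁻¹, 0, 0, 0]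
  have hqD : ∀ v, qeval cf v = 0 ↔ qeval D v = 0 := fun v => by
    rw [hcf]; simp [qeval, D, sub_eq_add_neg]
  have hdetD : (qmat D).det ≠ 0 := by
    simp [D, qmat_diag, det_diagonal, Fin.prod_univ_three, hb0, hb1']
  simp only [tangentLine_congr cf hqD]
  refine (four_tangents_iff D h2 hdetD).2
    ⟨_, by rw [qmat_diag, adjugate_diagonal_fin_three], ?_⟩
  simp only [cons_val_zero, cons_val_one, cons_val_two, head_cons,
    tail_cons]
  field_simp
  ring

end NormalForm

/-- In `PG(2,9)`, the four lines `[1,1,1]`, `[1,-1,1]`, `[1,-1,-1]`, `[1,1,-1]` are all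
tangent to a conic `O` iff `O` is given by `x² + (1/b)·y² - (1/(1+b))·z² = 0` for some
`b ≠ 0, -1`. -/
theorem four_tangents_normal_form (cf : Fin 6 → GF9) (hnd : (qmat cf).det ≠ 0) :
    (TangentLine cf ![1, 1, 1] ∧ TangentLine cf ![1, -1, 1] ∧
     TangentLine cf ![1, -1, -1] ∧ TangentLine cf ![1, 1, -1]) ↔
    ∃ b : GF9, b ≠ 0 ∧ b ≠ -1 ∧
      ∀ v : Fin 3 → GF9, qeval cf v = 0 ↔
        v 0 ^ 2 + b⁻¹ * v 1 ^ 2 - (1 + b)⁻¹ * v 2 ^ 2 = 0 := by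
  have h2 : (2 : GF9) ≠ 0 := by
    have := (CharP.cast_eq_zero_iff GF9 3 2).not.2 (by norm_num)
    exact_mod_cast this
  constructor
  · intro htangent
    obtain ⟨d, hadj, hsum⟩ := (four_tangents_iff cf h2 hnd).1 htangent
    exact exists_normal_form_of_adjugate_eq_diagonal cf h2 hnd hadj hsum
  · rintro ⟨b, hb0, hb1, hcf⟩
    exact four_tangents_of_normal_form cf h2 hb0 hb1 hcf
end
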